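/- arXiv:1706.05554 — 2 statements merged into one kernel-verified Lean document; each statement's English description precedes it below -/
import Mathlib

section
/- Let p_1, ..., p_n ∈ ℝ^d, u ∈ D^n a distribution, E_u = Σ_i u_i p_i, x = Σ_j u_j ‖p_j − E_u‖ > 0, v = Σ_j u_j ‖(p_j − E_u, x)‖, q_i = (p_i − E_u, x)/‖(p_i − E_u, x)‖, and s_i = u_i ‖(p_i − E_u, x)‖ / v. Let N ≥ 1 be a real number and let w' ∈ D^n be a distribution with ‖Σ_i (s_i − w'_i) q_i‖² ≤ 1/N. Define w''_j = v·w'_j / ‖(p_j − E_u, x)‖ for each j. Then (1 − Σ_j w''_j)² ≤ v²/(N·x²). -/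
open Finset

/-- `append a t` is the vector in `ℝ^{d+1}` obtained from `a ∈ ℝ^d` by appending the
coordinate `t`. -/
noncomputable def append {d : ℕ} (a : EuclideanSpace ℝ (Fin d)) (t : ℝ) :
    EuclideanSpace ℝ (Fin (d + 1)) :=
  (WithLp.equiv 2 (Fin (d + 1) → ℝ)).symm (Fin.snoc ((WithLp.equiv 2 (Fin d → ℝ)) a) t)

lemma append_last {d : ℕ} (a : EuclideanSpace ℝ (Fin d)) (t : ℝ) :
    append a t (Fin.last d) = t := by
  simp [append]

lemma coord_le_norm {m : ℕ} (y : EuclideanSpace ℝ (Fin m)) (j : Fin m) :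
    |y j| ≤ ‖y‖ := by
  rw [EuclideanSpace.norm_eq]
  rw [← Real.sqrt_sq_eq_abs]
  apply Real.sqrt_le_sqrt
  have h : (y j) ^ 2 = ‖y j‖ ^ 2 := by rw [Real.norm_eq_abs, sq_abs]
  rw [h]
  exact Finset.single_le_sum (fun i _ => sq_nonneg ‖y i‖) (Finset.mem_univ j)

/-- In the normalized setting, if `w'` is a distribution with
`‖∑ (sᵢ − w'ᵢ) qᵢ‖² ≤ 1/N` and `w''ⱼ = v·w'ⱼ/‖(pⱼ − E_u, x)‖`, then
`(1 − ∑ⱼ w''ⱼ)² ≤ v²/(N·x²)`. -/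
theorem sum_w_double_prime_close_to_one
    {n d : ℕ} (p : Fin n → EuclideanSpace ℝ (Fin d)) (u : Fin n → ℝ)
    (hu0 : ∀ i, 0 ≤ u i) (hu1 : ∑ i, u i = 1)
    (Eu : EuclideanSpace ℝ (Fin d)) (hEu : Eu = ∑ i, u i • p i)
    (x : ℝ) (hx : x = ∑ j, u j * ‖p j - Eu‖) (hxpos : 0 < x)
    (v : ℝ) (hv : v = ∑ j, u j * ‖append (p j - Eu) x‖)
    (q : Fin n → EuclideanSpace ℝ (Fin (d + 1)))
    (hq : ∀ i, q i = ‖append (p i - Eu) x‖⁻¹ • append (p i - Eu) x)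
    (s : Fin n → ℝ) (hs : ∀ i, s i = u i * ‖append (p i - Eu) x‖ / v)
    (N : ℝ) (hN : 1 ≤ N)
    (w' : Fin n → ℝ) (hw'0 : ∀ i, 0 ≤ w' i) (hw'1 : ∑ i, w' i = 1)
    (happrox : ‖∑ i, (s i - w' i) • q i‖ ^ 2 ≤ 1 / N)
    (w'' : Fin n → ℝ) (hw'' : ∀ j, w'' j = v * w' j / ‖append (p j - Eu) x‖) :
    (1 - ∑ j, w'' j) ^ 2 ≤ v ^ 2 / (N * x ^ 2) := by
  set a : Fin n → EuclideanSpace ℝ (Fin (d + 1)) := fun j => append (p j - Eu) x with ha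
  have hax : ∀ j, x ≤ ‖a j‖ := by
    intro j
    calc x = |a j (Fin.last d)| := by
            rw [ha]; simp [append_last, abs_of_pos hxpos]
      _ ≤ ‖a j‖ := coord_le_norm _ _
  have hapos : ∀ j, 0 < ‖a j‖ := fun j => lt_of_lt_of_le hxpos (hax j)
  have hvpos : 0 < v := by
    have : x ≤ v := by
      rw [hv]
      calc x = ∑ j, u j * x := by rw [← Finset.sum_mul, hu1, one_mul]
        _ ≤ ∑ j, u j * ‖a j‖ :=
          Finset.sum_le_sum fun j _ => mul_le_mul_of_nonneg_left (hax j) (hu0 j)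
    linarith
  have hNpos : 0 < N := lt_of_lt_of_le one_pos hN
  -- last coordinate of the sum
  have hlast : (∑ i, (s i - w' i) • q i) (Fin.last d) = (x / v) * (1 - ∑ j, w'' j) := by
    have : ∀ i, ((s i - w' i) • q i) (Fin.last d)
        = u i * x / v - (x / v) * w'' i := by
      intro i
      have hqi : q i (Fin.last d) = ‖a i‖⁻¹ * x := by
        rw [hq i]
        simp [PiLp.smul_apply, smul_eq_mul, ← ha, append_last]
        exact Or.inl rfl
      rw [PiLp.smul_apply, smul_eq_mul, hqi, hs i, hw'' i]
      rw [show ‖append (p i - Eu) x‖ = ‖a i‖ from rfl]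
      field_simp [(hapos i).ne']
    rw [WithLp.ofLp_sum, Finset.sum_apply, Finset.sum_congr rfl (fun i _ => this i), Finset.sum_sub_distrib,
      ← Finset.sum_div, ← Finset.sum_mul, hu1, ← Finset.mul_sum]
    ring
  have hbound : ((x / v) * (1 - ∑ j, w'' j)) ^ 2 ≤ 1 / N := by
    calc ((x / v) * (1 - ∑ j, w'' j)) ^ 2
        = |(∑ i, (s i - w' i) • q i) (Fin.last d)| ^ 2 := by rw [hlast, sq_abs]
      _ ≤ ‖∑ i, (s i - w' i) • q i‖ ^ 2 := by
          apply pow_le_pow_left₀ (abs_nonneg _) (coord_le_norm _ _)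
      _ ≤ 1 / N := happrox
  have hx2 : (0:ℝ) < x ^ 2 := by positivity
  rw [le_div_iff₀ (by positivity)]
  have hb2 : (x * (1 - ∑ j, w'' j)) ^ 2 * N ≤ 1 * v ^ 2 := by
    rw [← div_le_div_iff₀ (by positivity) hNpos]
    calc (x * (1 - ∑ j, w'' j)) ^ 2 / v ^ 2
        = ((x / v) * (1 - ∑ j, w'' j)) ^ 2 := by ring
      _ ≤ 1 / N := hbound
  nlinarith [hb2]
end

section
/- Let p_1, ..., p_n ∈ ℝ^d, u ∈ D^n a distribution, E_u = Σ_i u_i p_i, var_u = Σ_i u_i ‖p_i − E_u‖², x = Σ_j u_j ‖p_j − E_u‖ > 0, v = Σ_j u_j ‖(p_j − E_u, x)‖, q_i = (p_i − E_u, x)/‖(p_i − E_u, x)‖, and s_i = u_i ‖(p_i − E_u, x)‖ / v. There is an absolute constant α > 0 (one may take α = 22) such that for every real N ≥ 16 and every distribution w' ∈ D^n satisfying ‖Σ_i (s_i − w'_i) q_i‖² ≤ 1/N, the distribution w defined by w_i = w''_i / Σ_j w''_j with w''_i = v·w'_i / ‖(p_i − E_u, x)‖ has the same set of nonzero entries as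 w' and satisfies ‖Σ_i u_i p_i − Σ_i w_i p_i‖² ≤ α·var_u / N. -/
open Finset

lemma append_castSucc {d : ℕ} (a : EuclideanSpace ℝ (Fin d)) (t : ℝ) (i : Fin d) :
    append a t i.castSucc = a i := by
  simp [append]

lemma norm_append_sq {d : ℕ} (a : EuclideanSpace ℝ (Fin d)) (t : ℝ) :
    ‖append a t‖ ^ 2 = ‖a‖ ^ 2 + t ^ 2 := by
  rw [EuclideanSpace.norm_eq, EuclideanSpace.norm_eq,
    Real.sq_sqrt (by positivity), Real.sq_sqrt (by positivity),
    Fin.sum_univ_castSucc]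
  simp [append_last, append_castSucc, sq_abs]

lemma append_add {d : ℕ} (a b : EuclideanSpace ℝ (Fin d)) (s t : ℝ) :
    append a s + append b t = append (a + b) (s + t) := by
  ext i
  refine Fin.lastCases ?_ ?_ i <;>
    simp [append_last, append_castSucc]

lemma append_smul {d : ℕ} (c : ℝ) (a : EuclideanSpace ℝ (Fin d)) (t : ℝ) :
    c • append a t = append (c • a) (c * t) := by
  ext i
  refine Fin.lastCases ?_ ?_ i <;>
    simp [append_last, append_castSucc]

lemma append_zero {d : ℕ} : (append (0 : EuclideanSpace ℝ (Fin d)) 0) = 0 := by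
  ext i
  refine Fin.lastCases ?_ ?_ i <;>
    simp [append_last, append_castSucc]

lemma sum_append {d : ℕ} {ι : Type*} (s : Finset ι)
    (f : ι → EuclideanSpace ℝ (Fin d)) (g : ι → ℝ) :
    ∑ i ∈ s, append (f i) (g i) = append (∑ i ∈ s, f i) (∑ i ∈ s, g i) := by
  induction s using Finset.cons_induction with
  | empty => simp [append_zero]
  | cons j s hj ih => rw [Finset.sum_cons, Finset.sum_cons, Finset.sum_cons, ih, append_add]

set_option maxHeartbeats 1000000 in
/-- There is an absolute constant `α > 0` such that in the normalized setting, for any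
real `N ≥ 16` and any distribution `w'` with `‖∑ (sᵢ − w'ᵢ) qᵢ‖² ≤ 1/N`, the
renormalized distribution `wᵢ = w''ᵢ/∑ⱼ w''ⱼ` (with `w''ᵢ = v·w'ᵢ/‖(pᵢ − E_u, x)‖`)
has the same support as `w'` and satisfies
`‖∑ uᵢ pᵢ − ∑ wᵢ pᵢ‖² ≤ α·var_u/N`. -/
theorem error_bound_in_terms_of_variance :
    ∃ α : ℝ, 0 < α ∧
      ∀ {n d : ℕ} (p : Fin n → EuclideanSpace ℝ (Fin d)) (u : Fin n → ℝ),
        (∀ i, 0 ≤ u i) → (∑ i, u i = 1) →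
        ∀ (Eu : EuclideanSpace ℝ (Fin d)), Eu = ∑ i, u i • p i →
        ∀ (varu : ℝ), varu = ∑ i, u i * ‖p i - Eu‖ ^ 2 →
        ∀ (x : ℝ), x = ∑ j, u j * ‖p j - Eu‖ → 0 < x →
        ∀ (v : ℝ), v = ∑ j, u j * ‖append (p j - Eu) x‖ →
        ∀ (q : Fin n → EuclideanSpace ℝ (Fin (d + 1))),
          (∀ i, q i = ‖append (p i - Eu) x‖⁻¹ • append (p i - Eu) x) →
        ∀ (s : Fin n → ℝ), (∀ i, s i = u i * ‖append (p i - Eu) x‖ / v) →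
        ∀ (N : ℝ), 16 ≤ N →
        ∀ (w' : Fin n → ℝ), (∀ i, 0 ≤ w' i) → (∑ i, w' i = 1) →
          ‖∑ i, (s i - w' i) • q i‖ ^ 2 ≤ 1 / N →
        ∀ (w'' : Fin n → ℝ), (∀ i, w'' i = v * w' i / ‖append (p i - Eu) x‖) →
        ∀ (w : Fin n → ℝ), (∀ i, w i = w'' i / ∑ j, w'' j) →
          {i | w i ≠ 0} = {i | w' i ≠ 0} ∧
          ‖(∑ i, u i • p i) - ∑ i, w i • p i‖ ^ 2 ≤ α * varu / N := by
  refine ⟨22, by norm_num, ?_⟩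
  intro n d p u hu hu1 Eu hEu varu hvaru x hx hxpos v hv q hq s hs N hN w' hw'0 hw'1 herr
    w'' hw'' w hw
  have hN0 : (0 : ℝ) < N := by linarith
  -- abbreviate the norms
  obtain ⟨b, hb⟩ : ∃ b : Fin n → ℝ, ∀ i, b i = ‖append (p i - Eu) x‖ := ⟨_, fun _ => rfl⟩
  simp_rw [← hb] at hv hq hs hw''
  have hbsq : ∀ i, b i ^ 2 = ‖p i - Eu‖ ^ 2 + x ^ 2 := fun i => by
    rw [hb]; exact norm_append_sq _ _
  have hbnn : ∀ i, 0 ≤ b i := fun i => by rw [hb]; exact norm_nonneg _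
  have hbx : ∀ i, x ≤ b i := fun i => by
    nlinarith [hbsq i, hbnn i, sq_nonneg (‖p i - Eu‖)]
  have hbpos : ∀ i, 0 < b i := fun i => lt_of_lt_of_le hxpos (hbx i)
  have hble : ∀ i, b i ≤ ‖p i - Eu‖ + x := fun i => by
    nlinarith [hbsq i, hbnn i, norm_nonneg (p i - Eu)]
  have hvx : x ≤ v := by
    rw [hv]
    calc x = ∑ j, u j * x := by rw [← Finset.sum_mul, hu1, one_mul]
      _ ≤ ∑ j, u j * b j := Finset.sum_le_sum fun i _ =>
          mul_le_mul_of_nonneg_left (hbx i) (hu i)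
  have hvpos : 0 < v := lt_of_lt_of_le hxpos hvx
  have hv2x : v ≤ 2 * x := by
    rw [hv]
    calc ∑ j, u j * b j ≤ ∑ j, u j * (‖p j - Eu‖ + x) :=
          Finset.sum_le_sum fun i _ => mul_le_mul_of_nonneg_left (hble i) (hu i)
      _ = (∑ j, u j * ‖p j - Eu‖) + (∑ j, u j) * x := by
          rw [Finset.sum_mul, ← Finset.sum_add_distrib]; exact Finset.sum_congr rfl fun j _ => by ring
      _ = 2 * x := by rw [hu1, ← hx]; ring
  have hxvar : x ^ 2 ≤ varu := by
    have hcs := Finset.sum_sq_le_sum_mul_sum_of_sq_eq_mul (univ : Finset (Fin n))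
      (r := fun i => u i * ‖p i - Eu‖) (f := u) (g := fun i => u i * ‖p i - Eu‖ ^ 2)
      (fun i _ => hu i) (fun i _ => mul_nonneg (hu i) (sq_nonneg _)) (fun i _ => by ring)
    rw [hu1, one_mul] at hcs
    rw [hx, hvaru]
    exact hcs
  have hsa : ∑ i, u i • (p i - Eu) = 0 := by
    have : ∑ i, u i • (p i - Eu) = (∑ i, u i • p i) - (∑ i, u i) • Eu := by
      simp [smul_sub, Finset.sum_sub_distrib, Finset.sum_smul]
    rw [this, hu1, one_smul, ← hEu, sub_self]
  set S : EuclideanSpace ℝ (Fin d) := ∑ i, w'' i • (p i - Eu) with hSdef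
  set W : ℝ := ∑ j, w'' j with hWdef
  -- per-term coefficient computation
  have hci : ∀ i, (s i - w' i) / b i = (u i - w'' i) / v := by
    intro i
    have h1 := (hbpos i).ne'
    have h2 := hvpos.ne'
    rw [div_eq_div_iff h1 h2, hs i, hw'' i]
    field_simp
  have hkey : ∑ i, (s i - w' i) • q i = append (v⁻¹ • (-S)) ((1 - W) * x / v) := by
    have h1 : ∀ i, (s i - w' i) • q i
        = append (((u i - w'' i) / v) • (p i - Eu)) ((u i - w'' i) / v * x) := by
      intro i
      rw [hq i, smul_smul, ← div_eq_mul_inv, hci i, append_smul]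
    have hA : ∑ i, ((u i - w'' i) / v) • (p i - Eu) = v⁻¹ • (-S) := by
      simp_rw [div_eq_inv_mul, mul_smul]
      rw [← Finset.smul_sum]
      congr 1
      simp_rw [sub_smul]
      rw [Finset.sum_sub_distrib, hsa, zero_sub, ← hSdef]
    have hT : ∑ i, ((u i - w'' i) / v * x) = (1 - W) * x / v := by
      simp_rw [div_mul_eq_mul_div]
      rw [← Finset.sum_div, ← Finset.sum_mul, Finset.sum_sub_distrib, hu1, ← hWdef]
    rw [Finset.sum_congr rfl fun i _ => h1 i, sum_append, hA, hT]
  have hnorm : ‖∑ i, (s i - w' i) • q i‖ ^ 2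
      = (‖S‖ ^ 2 + (1 - W) ^ 2 * x ^ 2) / v ^ 2 := by
    rw [hkey, norm_append_sq, norm_smul, norm_neg, Real.norm_eq_abs,
      abs_of_pos (inv_pos.2 hvpos)]
    field_simp
  rw [hnorm] at herr
  have h6 : ‖S‖ ^ 2 + (1 - W) ^ 2 * x ^ 2 ≤ v ^ 2 / N := by
    rw [div_le_div_iff₀ (by positivity) hN0] at herr
    rw [le_div_iff₀ hN0]
    linarith
  have hSb : ‖S‖ ^ 2 ≤ v ^ 2 / N := by nlinarith [sq_nonneg ((1 - W) * x)]
  have hWb : (1 - W) ^ 2 * x ^ 2 ≤ v ^ 2 / N := by nlinarith [sq_nonneg ‖S‖]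
  have hvN : v ^ 2 / N ≤ x ^ 2 / 4 := by
    have h1 : v ^ 2 / N ≤ v ^ 2 / 16 :=
      div_le_div_of_nonneg_left (sq_nonneg v) (by norm_num) hN
    nlinarith
  have hWhalf : 1 / 2 ≤ W := by
    have h2 : (1 - W) ^ 2 * x ^ 2 ≤ x ^ 2 / 4 := le_trans hWb hvN
    have hx2 : 0 < x ^ 2 := by positivity
    have h7 : (1 - W) ^ 2 ≤ 1 / 4 := by nlinarith
    nlinarith [sq_nonneg (1 - W - 1 / 2)]
  have hWpos : 0 < W := by linarith
  have hWne : W ≠ 0 := hWpos.ne'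
  have hwsum : ∑ i, w i = 1 := by
    simp_rw [hw]
    rw [← Finset.sum_div, ← hWdef, div_self hWne]
  constructor
  · ext i
    simp only [Set.mem_setOf_eq, hw i, hw'' i, div_ne_zero_iff, mul_ne_zero_iff]
    simp [hvpos.ne', (hbpos i).ne', hWne]
  · have hwa : ∑ i, w i • (p i - Eu) = W⁻¹ • S := by
      simp_rw [hw, div_eq_inv_mul, mul_smul]
      rw [← Finset.smul_sum, ← hSdef]
    have h2 : ∑ i, w i • (p i - Eu) = (∑ i, w i • p i) - (∑ i, w i) • Eu := by
      simp [smul_sub, Finset.sum_sub_distrib, Finset.sum_smul]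
    rw [hwa, hwsum, one_smul] at h2
    have h3 : (∑ i, w i • p i) - Eu = W⁻¹ • S := h2.symm
    have h4 : (∑ i, u i • p i) - ∑ i, w i • p i = -(W⁻¹ • S) := by
      rw [← hEu, ← h3]; abel
    rw [h4, norm_neg, norm_smul, Real.norm_eq_abs, abs_of_pos (inv_pos.2 hWpos), mul_pow]
    have hWinv : W⁻¹ ≤ 2 := by
      rw [inv_eq_one_div, div_le_iff₀ hWpos]; linarith
    have hWinv0 : 0 ≤ W⁻¹ := inv_nonneg.2 hWpos.le
    calc W⁻¹ ^ 2 * ‖S‖ ^ 2 ≤ 2 ^ 2 * (v ^ 2 / N) := by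
          apply mul_le_mul _ hSb (sq_nonneg _) (by norm_num)
          nlinarith
      _ = (4 * v ^ 2) / N := by ring
      _ ≤ 22 * varu / N := by
          have h5 : 4 * v ^ 2 ≤ 22 * varu := by nlinarith
          gcongr
end
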